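/- arXiv:1508.01820 — 6 statements merged into one kernel-verified Lean document; each statement's English description precedes it below -/
import Mathlib

section
/- Let G be a bipartite multigraph with bipartition (A, B), let φ be a proper Δ-edge-colouring of G with colours in {1,…,Δ}, where Δ is the maximum degree. Orient the line graph L(G) by directing, for each pair of adjacent edges e₁, e₂ with φ(e₁) < φ(e₂) meeting at a vertex v: from e₂ to e₁ if v ∈ A, and from e₁ to e₂ if v ∈ B. Then every vertex of this oriented line graph has outdegree at most Δ − 1. -/
/-- A multigraph: each edge has an unordered pair of (distinct) endpoints. -/
structure Multigraph (V E : Type*) where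
  ends : E → Sym2 V
  not_loop : ∀ e, ¬ (ends e).IsDiag

namespace Multigraph

variable {V E : Type*}

/-- Two edges are adjacent in the line graph iff they are distinct and share an endpoint. -/
def Adj (G : Multigraph V E) (e f : E) : Prop :=
  e ≠ f ∧ ∃ v, v ∈ G.ends e ∧ v ∈ G.ends f

/-- A proper edge-colouring: adjacent edges get distinct colours. -/
def Proper (G : Multigraph V E) (φ : E → ℕ) : Prop :=
  ∀ e f, G.Adj e f → φ e ≠ φ f

/-- The degree of a vertex: the number of edges incident to it. -/
noncomputable def degree (G : Multigraph V E) (v : V) : ℕ :=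
  Nat.card {e : E // v ∈ G.ends e}

/-- In the Galvin orientation with respect to the partition (`D`, complement of `D`)
and colouring `φ`: there is an arc from `e` to `f` at the common incidence `v`
iff `v ∈ D` and `φ f < φ e` (towards the smaller colour), or `v ∉ D` and
`φ e < φ f` (towards the larger colour). -/
def ArcAt (G : Multigraph V E) (D : V → Prop) (φ : E → ℕ) (e : E) (v : V) (f : E) : Prop :=
  e ≠ f ∧ v ∈ G.ends e ∧ v ∈ G.ends f ∧
    ((D v ∧ φ f < φ e) ∨ (¬ D v ∧ φ e < φ f))

/-- Arc from `e` to `f` at some common incidence. -/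
def Arc (G : Multigraph V E) (D : V → Prop) (φ : E → ℕ) (e f : E) : Prop :=
  ∃ v, G.ArcAt D φ e v f

/-- Outdegree of `e` in the Galvin orientation, counting incidences. -/
noncomputable def outdeg (G : Multigraph V E) (D : V → Prop) (φ : E → ℕ) (e : E) : ℕ :=
  Nat.card {p : V × E // G.ArcAt D φ e p.1 p.2}

end Multigraph

/-- In the Galvin orientation of the line graph of a bipartite multigraph with
bipartition `(A, B)` with respect to a proper `Δ`-edge-colouring (arcs at `A`-vertices
towards the smaller colour, at `B`-vertices towards the larger colour), every vertex
of the oriented line graph has outdegree at most `Δ − 1`. -/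
theorem bipartite_galvin_outdegree {V E : Type*} (G : Multigraph V E)
    (A : V → Prop) (Δ : ℕ)
    (hbip : ∀ e, ∃ a b, G.ends e = s(a, b) ∧ A a ∧ ¬ A b)
    (hdeg : ∀ v, G.degree v ≤ Δ)
    (φ : E → ℕ) (hproper : G.Proper φ)
    (hrange : ∀ e, φ e ∈ Finset.Icc 1 Δ) :
    ∀ e, G.outdeg A φ e ≤ Δ - 1 := by
  classical
  intro e
  obtain ⟨a, b, hab, hA, hB⟩ := hbip e
  have hφe := hrange e
  have hmem : ∀ v, v ∈ G.ends e → v = a ∨ v = b := by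
    intro v hv; rw [hab] at hv; exact Sym2.mem_iff.mp hv
  have key : ∀ p : {p : V × E // G.ArcAt A φ e p.1 p.2},
      φ p.1.2 ∈ (Finset.Icc 1 Δ).erase (φ e) := by
    rintro ⟨⟨v, f⟩, hne, hv, hvf, hcond⟩
    show φ f ∈ _
    rw [Finset.mem_erase]
    refine ⟨?_, hrange f⟩
    replace hcond : (A v ∧ φ f < φ e) ∨ (¬ A v ∧ φ e < φ f) := hcond
    rcases hcond with ⟨_, h⟩ | ⟨_, h⟩ <;> omega
  have inj : Function.Injective (fun p : {p : V × E // G.ArcAt A φ e p.1 p.2} =>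
      (⟨φ p.1.2, key p⟩ : ((Finset.Icc 1 Δ).erase (φ e) : Finset ℕ))) := by
    rintro ⟨⟨v, f⟩, hne, hv, hvf, hcond⟩ ⟨⟨v', f'⟩, hne', hv', hvf', hcond'⟩ h
    simp only [Subtype.mk.injEq] at h
    replace h : φ f = φ f' := h
    replace hcond : (A v ∧ φ f < φ e) ∨ (¬ A v ∧ φ e < φ f) := hcond
    replace hcond' : (A v' ∧ φ f' < φ e) ∨ (¬ A v' ∧ φ e < φ f') := hcond'
    have hva : A v → v = a := by
      intro hAv; rcases hmem v hv with rfl | rfl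
      · rfl
      · exact absurd hAv hB
    have hvb : ¬ A v → v = b := by
      intro hAv; rcases hmem v hv with rfl | rfl
      · exact absurd hA hAv
      · rfl
    have hva' : A v' → v' = a := by
      intro hAv; rcases hmem v' hv' with rfl | rfl
      · rfl
      · exact absurd hAv hB
    have hvb' : ¬ A v' → v' = b := by
      intro hAv; rcases hmem v' hv' with rfl | rfl
      · exact absurd hA hAv
      · rfl
    have hproper_ne : ∀ w, w ∈ G.ends f → w ∈ G.ends f' → f ≠ f' → False := by
      intro w hw hw' hff
      exact hproper f f' ⟨hff, w, hw, hw'⟩ h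
    have hff : f = f' := by
      by_contra hff
      rcases hcond with ⟨hD, hlt⟩ | ⟨hD, hlt⟩ <;>
        rcases hcond' with ⟨hD', hlt'⟩ | ⟨hD', hlt'⟩
      · exact hproper_ne a (hva hD ▸ hvf) (hva' hD' ▸ hvf') hff
      · omega
      · omega
      · exact hproper_ne b (hvb hD ▸ hvf) (hvb' hD' ▸ hvf') hff
    subst hff
    have hvv : v = v' := by
      rcases hcond with ⟨hD, hlt⟩ | ⟨hD, hlt⟩ <;>
        rcases hcond' with ⟨hD', hlt'⟩ | ⟨hD', hlt'⟩
      · rw [hva hD, hva' hD']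
      · omega
      · omega
      · rw [hvb hD, hvb' hD']
    simp [hvv]
  calc G.outdeg A φ e ≤ Nat.card ((Finset.Icc 1 Δ).erase (φ e) : Finset ℕ) :=
        Nat.card_le_card_of_injective _ inj
    _ = ((Finset.Icc 1 Δ).erase (φ e)).card := Nat.card_eq_finsetCard _
    _ = Δ - 1 := by
        rw [Finset.card_erase_of_mem hφe, Nat.card_Icc]
        omega
end

section
/- Let G be a multigraph with vertex partition (D, U) and proper k-edge-colouring φ, and consider the Galvin orientation of L(G). For any triangle in G with edges e₁, e₂, e₃ satisfying φ(e₁) < φ(e₂) < φ(e₃): if both endpoints of e₁ lie in D then the corresponding triangle in L(G) has e₁ as a sink; if both endpoints of e₁ lie in U then e₁ is a source; if both endpoints of e₃ lie in D then e₃ is a source; if both endpoints of e₃ lie in U then e₃ is a sink. In each of these cases the triangle in L(G) is not a directed cycle. -/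
/-- For a triangle of `G` with edges `e₁, e₂, e₃`, `φ e₁ < φ e₂ < φ e₃`, in the Galvin
orientation: if both ends of `e₁` are in `D` then `e₁` is a sink of the corresponding
triangle of `L(G)`; if both are in `U` then `e₁` is a source; if both ends of `e₃` are in
`D` then `e₃` is a source; if both are in `U` then `e₃` is a sink.  In each of these
cases the triangle of `L(G)` is not a directed cycle. -/
theorem galvin_triangle_transitive {V E : Type*} (G : Multigraph V E)
    (D : V → Prop) (φ : E → ℕ) (hproper : G.Proper φ)
    (a b c : V) (hab : a ≠ b) (hbc : b ≠ c) (hac : a ≠ c)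
    (e₁ e₂ e₃ : E)
    (h1 : G.ends e₁ = s(a, b)) (h2 : G.ends e₂ = s(b, c)) (h3 : G.ends e₃ = s(c, a))
    (h12 : φ e₁ < φ e₂) (h23 : φ e₂ < φ e₃) :
    (D a ∧ D b → G.ArcAt D φ e₂ b e₁ ∧ G.ArcAt D φ e₃ a e₁) ∧
    (¬ D a ∧ ¬ D b → G.ArcAt D φ e₁ b e₂ ∧ G.ArcAt D φ e₁ a e₃) ∧
    (D c ∧ D a → G.ArcAt D φ e₃ c e₂ ∧ G.ArcAt D φ e₃ a e₁) ∧
    (¬ D c ∧ ¬ D a → G.ArcAt D φ e₂ c e₃ ∧ G.ArcAt D φ e₁ a e₃) ∧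
    ((D a ∧ D b) ∨ (¬ D a ∧ ¬ D b) ∨ (D c ∧ D a) ∨ (¬ D c ∧ ¬ D a) →
      ¬ (G.ArcAt D φ e₁ b e₂ ∧ G.ArcAt D φ e₂ c e₃ ∧ G.ArcAt D φ e₃ a e₁) ∧
      ¬ (G.ArcAt D φ e₂ b e₁ ∧ G.ArcAt D φ e₃ c e₂ ∧ G.ArcAt D φ e₁ a e₃)) := by
  have h13 : φ e₁ < φ e₃ := h12.trans h23
  have ne12 : e₁ ≠ e₂ := fun h => absurd (congrArg φ h) h12.ne
  have ne23 : e₂ ≠ e₃ := fun h => absurd (congrArg φ h) h23.ne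
  have ne13 : e₁ ≠ e₃ := fun h => absurd (congrArg φ h) h13.ne
  have ha1 : a ∈ G.ends e₁ := by rw [h1]; simp
  have hb1 : b ∈ G.ends e₁ := by rw [h1]; simp
  have hb2 : b ∈ G.ends e₂ := by rw [h2]; simp
  have hc2 : c ∈ G.ends e₂ := by rw [h2]; simp
  have hc3 : c ∈ G.ends e₃ := by rw [h3]; simp
  have ha3 : a ∈ G.ends e₃ := by rw [h3]; simp
  refine ⟨fun ⟨hDa, hDb⟩ => ⟨⟨ne12.symm, hb2, hb1, Or.inl ⟨hDb, h12⟩⟩,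
      ⟨ne13.symm, ha3, ha1, Or.inl ⟨hDa, h13⟩⟩⟩,
    fun ⟨hDa, hDb⟩ => ⟨⟨ne12, hb1, hb2, Or.inr ⟨hDb, h12⟩⟩,
      ⟨ne13, ha1, ha3, Or.inr ⟨hDa, h13⟩⟩⟩,
    fun ⟨hDc, hDa⟩ => ⟨⟨ne23.symm, hc3, hc2, Or.inl ⟨hDc, h23⟩⟩,
      ⟨ne13.symm, ha3, ha1, Or.inl ⟨hDa, h13⟩⟩⟩,
    fun ⟨hDc, hDa⟩ => ⟨⟨ne23, hc2, hc3, Or.inr ⟨hDc, h23⟩⟩,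
      ⟨ne13, ha1, ha3, Or.inr ⟨hDa, h13⟩⟩⟩, ?_⟩
  rintro (⟨hDa, hDb⟩ | ⟨hDa, hDb⟩ | ⟨hDc, hDa⟩ | ⟨hDc, hDa⟩) <;>
    refine ⟨fun ⟨A1, A2, A3⟩ => ?_, fun ⟨B1, B2, B3⟩ => ?_⟩
  · rcases A1.2.2.2 with ⟨_, h⟩ | ⟨h, _⟩ <;> first | omega | tauto
  · rcases B3.2.2.2 with ⟨_, h⟩ | ⟨h, _⟩ <;> first | omega | tauto
  · rcases A3.2.2.2 with ⟨h, _⟩ | ⟨_, h⟩ <;> first | omega | tauto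
  · rcases B1.2.2.2 with ⟨h, _⟩ | ⟨_, h⟩ <;> first | omega | tauto
  · rcases A2.2.2.2 with ⟨_, h⟩ | ⟨h, _⟩ <;> first | omega | tauto
  · rcases B3.2.2.2 with ⟨_, h⟩ | ⟨h, _⟩ <;> first | omega | tauto
  · rcases A3.2.2.2 with ⟨h, _⟩ | ⟨_, h⟩ <;> first | omega | tauto
  · rcases B2.2.2.2 with ⟨h, _⟩ | ⟨_, h⟩ <;> first | omega | tauto
end

section
/- For every even n ≥ 4: in any proper (n−1)-edge-colouring φ of K_n and any partition (D, U) of its vertices such that the associated Galvin orientation of L(K_n) has all outdegrees at most n − 2, there exist vertices x ∈ D, y ∈ U, z ∈ D such that φ(xy) = n − 1 and φ(yz) = 1, and the triangle xyz corresponds to a directed triangle in L(K_n). -/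
/-- Edges of the complete graph on `Fin n`: non-diagonal unordered pairs. -/
def KnE (n : ℕ) := {p : Sym2 (Fin n) // ¬ p.IsDiag}

/-- The complete graph `K_n` as a multigraph. -/
def Kn (n : ℕ) : Multigraph (Fin n) (KnE n) := ⟨Subtype.val, fun e => e.2⟩

instance (n : ℕ) : Finite (KnE n) := by unfold KnE; infer_instance

/-- Helper: the edge of `K_n` joining two distinct vertices. -/
def Galvin.edg {n : ℕ} {v w : Fin n} (h : v ≠ w) : KnE n :=
  ⟨s(v, w), fun hd => h (Sym2.mk_isDiag_iff.mp hd)⟩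

namespace Galvin

variable {n : ℕ}

lemma ends_edg {v w : Fin n} (h : v ≠ w) : (Kn n).ends (edg h) = s(v, w) := rfl

/-- Every colour in `[1, n-1]` appears at every vertex. -/
lemma exists_colour (hn : 4 ≤ n) (φ : KnE n → ℕ) (hproper : (Kn n).Proper φ)
    (hrange : ∀ e, φ e ∈ Finset.Icc 1 (n - 1)) (v : Fin n) (c : ℕ)
    (hc : c ∈ Finset.Icc 1 (n - 1)) :
    ∃ e : KnE n, v ∈ (Kn n).ends e ∧ φ e = c := by
  classical
  set s : Finset (Fin n) := Finset.univ.erase v with hs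
  have hcard : (Finset.Icc 1 (n - 1)).card ≤ s.card := by
    rw [hs, Finset.card_erase_of_mem (Finset.mem_univ v), Nat.card_Icc]
    simp
  have key := Finset.surj_on_of_inj_on_of_card_le
    (s := s) (t := Finset.Icc 1 (n - 1))
    (fun w hw => φ (edg (Finset.ne_of_mem_erase hw)))
    (fun w hw => hrange _)
    (fun w₁ w₂ hw₁ hw₂ heq => by
      by_contra hne
      refine hproper _ _ ⟨?_, v, ?_, ?_⟩ heq
      · intro hE
        have : s(w₁, v) = s(w₂, v) := congrArg Subtype.val hE
        rcases Sym2.eq_iff.mp this with ⟨h1, _⟩ | ⟨h1, h2⟩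
        · exact hne h1
        · exact Finset.ne_of_mem_erase hw₂ h2.symm
      · exact Sym2.mem_mk_right _ _
      · exact Sym2.mem_mk_right _ _)
    hcard
  obtain ⟨w, hw, hwc⟩ := key c hc
  exact ⟨edg (Finset.ne_of_mem_erase hw), Sym2.mem_mk_right _ _, hwc.symm⟩

/-- If a vertex `v` of `e` is "bad" (in `D` with `e` of top colour, or out of `D`
with `e` of bottom colour), then `e` has `n - 2` out-neighbours at `v`. -/
lemma card_arcAt_ge (hn : 4 ≤ n) (φ : KnE n → ℕ) (hproper : (Kn n).Proper φ)
    (hrange : ∀ e, φ e ∈ Finset.Icc 1 (n - 1)) (D : Fin n → Prop)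
    (e : KnE n) (v : Fin n) (hv : v ∈ (Kn n).ends e)
    (hbad : (D v ∧ φ e = n - 1) ∨ (¬ D v ∧ φ e = 1)) :
    n - 2 ≤ Nat.card {f : KnE n // (Kn n).ArcAt D φ e v f} := by
  classical
  -- the interval of colours that are out-neighbour colours at v
  obtain ⟨hDv, hcol⟩ | ⟨hDv, hcol⟩ := hbad
  · -- D-case: colours 1 .. n-2
    have hch : ∀ c : {c // c ∈ Finset.Icc 1 (n - 2)},
        ∃ f : KnE n, v ∈ (Kn n).ends f ∧ φ f = c.1 := by
      rintro ⟨c, hc⟩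
      simp only [Finset.mem_Icc] at hc
      exact exists_colour hn φ hproper hrange v c (by simp only [Finset.mem_Icc]; omega)
    choose g hg1 hg2 using hch
    have hginj : Function.Injective g := by
      intro c₁ c₂ h
      apply Subtype.ext
      rw [← hg2 c₁, ← hg2 c₂, h]
    have hmap : ∀ c, (Kn n).ArcAt D φ e v (g c) := by
      intro c
      obtain ⟨hc1, hc2⟩ := Finset.mem_Icc.mp c.2
      have hlt : φ (g c) < φ e := by rw [hg2, hcol]; omega
      exact ⟨fun h => by rw [← h, hcol] at hlt; omega, hv,
        hg1 _, Or.inl ⟨hDv, hlt⟩⟩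
    have := Nat.card_le_card_of_injective
      (fun c => (⟨g c, hmap c⟩ : {f : KnE n // (Kn n).ArcAt D φ e v f}))
      (fun c₁ c₂ h => hginj (by exact congrArg Subtype.val h))
    rwa [Nat.card_eq_finsetCard, Nat.card_Icc, show n - 2 + 1 - 1 = n - 2 by omega] at this
  · -- U-case: colours 2 .. n-1
    have hch : ∀ c : {c // c ∈ Finset.Icc 2 (n - 1)},
        ∃ f : KnE n, v ∈ (Kn n).ends f ∧ φ f = c.1 := by
      rintro ⟨c, hc⟩
      simp only [Finset.mem_Icc] at hc
      exact exists_colour hn φ hproper hrange v c (by simp only [Finset.mem_Icc]; omega)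
    choose g hg1 hg2 using hch
    have hginj : Function.Injective g := by
      intro c₁ c₂ h
      apply Subtype.ext
      rw [← hg2 c₁, ← hg2 c₂, h]
    have hmap : ∀ c, (Kn n).ArcAt D φ e v (g c) := by
      intro c
      obtain ⟨hc1, hc2⟩ := Finset.mem_Icc.mp c.2
      have hlt : φ e < φ (g c) := by rw [hg2, hcol]; omega
      exact ⟨fun h => by rw [← h, hcol] at hlt; omega, hv,
        hg1 _, Or.inr ⟨hDv, hlt⟩⟩
    have := Nat.card_le_card_of_injective
      (fun c => (⟨g c, hmap c⟩ : {f : KnE n // (Kn n).ArcAt D φ e v f}))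
      (fun c₁ c₂ h => hginj (by exact congrArg Subtype.val h))
    rwa [Nat.card_eq_finsetCard, Nat.card_Icc, show n - 1 + 1 - 2 = n - 2 by omega] at this

/-- If both ends of an edge are bad, the outdegree bound is violated. -/
lemma not_both_bad (hn : 4 ≤ n) (φ : KnE n → ℕ) (hproper : (Kn n).Proper φ)
    (hrange : ∀ e, φ e ∈ Finset.Icc 1 (n - 1)) (D : Fin n → Prop)
    (hout : ∀ e, (Kn n).outdeg D φ e ≤ n - 2)
    (e : KnE n) (a b : Fin n) (hab : a ≠ b) (hends : (Kn n).ends e = s(a, b))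
    (hbada : (D a ∧ φ e = n - 1) ∨ (¬ D a ∧ φ e = 1))
    (hbadb : (D b ∧ φ e = n - 1) ∨ (¬ D b ∧ φ e = 1)) : False := by
  classical
  have ha : a ∈ (Kn n).ends e := by rw [hends]; exact Sym2.mem_mk_left a b
  have hb : b ∈ (Kn n).ends e := by rw [hends]; exact Sym2.mem_mk_right a b
  have hca := card_arcAt_ge hn φ hproper hrange D e a ha hbada
  have hcb := card_arcAt_ge hn φ hproper hrange D e b hb hbadb
  -- inject the disjoint union of the two neighbourhoods into the outdegree set
  let F : {f : KnE n // (Kn n).ArcAt D φ e a f} ⊕ {f : KnE n // (Kn n).ArcAt D φ e b f} →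
      {p : Fin n × KnE n // (Kn n).ArcAt D φ e p.1 p.2} :=
    fun x => match x with
      | Sum.inl f => ⟨(a, f.1), f.2⟩
      | Sum.inr f => ⟨(b, f.1), f.2⟩
  have hFinj : Function.Injective F := by
    rintro (f₁ | f₁) (f₂ | f₂) h
    · exact congrArg Sum.inl (Subtype.ext (congrArg (fun t => t.1.2) h))
    · exact absurd (congrArg (fun t => t.1.1) h) hab
    · exact absurd (congrArg (fun t => t.1.1) h) hab.symm
    · exact congrArg Sum.inr (Subtype.ext (congrArg (fun t => t.1.2) h))
  have hle := Nat.card_le_card_of_injective F hFinj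
  rw [Nat.card_sum] at hle
  have houte := hout e
  unfold Multigraph.outdeg at houte
  omega

end Galvin

/-- For even `n ≥ 4`: in any proper `(n−1)`-edge-colouring of `K_n` and vertex partition
`(D, U)` whose Galvin orientation has all outdegrees at most `n − 2`, there are vertices
`x ∈ D`, `y ∈ U`, `z ∈ D` with `φ(xy) = n − 1`, `φ(yz) = 1`, and the triangle `xyz`
corresponds to a directed triangle in `L(K_n)`. -/
theorem even_clique_directed_triangle (n : ℕ) (hn : 4 ≤ n) (heven : Even n)
    (φ : KnE n → ℕ) (hproper : (Kn n).Proper φ)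
    (hrange : ∀ e, φ e ∈ Finset.Icc 1 (n - 1))
    (D : Fin n → Prop)
    (hout : ∀ e, (Kn n).outdeg D φ e ≤ n - 2) :
    ∃ (x y z : Fin n) (e₁ e₂ e₃ : KnE n),
      D x ∧ ¬ D y ∧ D z ∧ x ≠ y ∧ y ≠ z ∧ x ≠ z ∧
      (Kn n).ends e₁ = s(x, y) ∧ φ e₁ = n - 1 ∧
      (Kn n).ends e₂ = s(y, z) ∧ φ e₂ = 1 ∧
      (Kn n).ends e₃ = s(x, z) ∧
      (Kn n).Arc D φ e₁ e₃ ∧ (Kn n).Arc D φ e₃ e₂ ∧ (Kn n).Arc D φ e₂ e₁ := by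
  classical
  -- D is nonempty
  have hD : ∃ x, D x := by
    by_contra h
    push_neg at h
    obtain ⟨e, he, hφe⟩ := Galvin.exists_colour hn φ hproper hrange
      ⟨0, by omega⟩ 1 (by simp only [Finset.mem_Icc]; omega)
    obtain ⟨b, hends⟩ := Sym2.mem_iff_exists.mp he
    have hab : (⟨0, by omega⟩ : Fin n) ≠ b := by
      intro hEq
      exact (Kn n).not_loop e (by rw [hends, hEq]; exact Sym2.mk_isDiag_iff.mpr rfl)
    exact Galvin.not_both_bad hn φ hproper hrange D hout e _ b hab hends
      (Or.inr ⟨h _, hφe⟩) (Or.inr ⟨h _, hφe⟩)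
  obtain ⟨x, hx⟩ := hD
  -- the top-colour edge at x
  obtain ⟨e₁, hxe₁, hφ₁⟩ := Galvin.exists_colour hn φ hproper hrange x (n - 1)
    (by simp only [Finset.mem_Icc]; omega)
  obtain ⟨y, hends₁⟩ := Sym2.mem_iff_exists.mp hxe₁
  have hxy : x ≠ y := fun hEq =>
    (Kn n).not_loop e₁ (by rw [hends₁, hEq]; exact Sym2.mk_isDiag_iff.mpr rfl)
  have hy : ¬ D y := fun hDy =>
    Galvin.not_both_bad hn φ hproper hrange D hout e₁ x y hxy hends₁
      (Or.inl ⟨hx, hφ₁⟩) (Or.inl ⟨hDy, hφ₁⟩)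
  -- the bottom-colour edge at y
  obtain ⟨e₂, hye₂, hφ₂⟩ := Galvin.exists_colour hn φ hproper hrange y 1
    (by simp only [Finset.mem_Icc]; omega)
  obtain ⟨z, hends₂⟩ := Sym2.mem_iff_exists.mp hye₂
  have hyz : y ≠ z := fun hEq =>
    (Kn n).not_loop e₂ (by rw [hends₂, hEq]; exact Sym2.mk_isDiag_iff.mpr rfl)
  have hz : D z := by
    by_contra hDz
    exact Galvin.not_both_bad hn φ hproper hrange D hout e₂ y z hyz hends₂
      (Or.inr ⟨hy, hφ₂⟩) (Or.inr ⟨hDz, hφ₂⟩)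
  have hne₁₂ : e₁ ≠ e₂ := fun hEq => by rw [hEq, hφ₂] at hφ₁; omega
  have hxz : x ≠ z := by
    intro hEq
    apply hne₁₂
    apply Subtype.ext
    show (Kn n).ends e₁ = (Kn n).ends e₂
    rw [hends₁, hends₂, ← hEq, Sym2.eq_swap]
  -- the third edge
  set e₃ : KnE n := Galvin.edg hxz with he₃
  have hends₃ : (Kn n).ends e₃ = s(x, z) := rfl
  have hne₁₃ : e₁ ≠ e₃ := by
    intro hEq
    have : s(x, y) = s(x, z) := by rw [← hends₁, ← hends₃, hEq]
    rcases Sym2.eq_iff.mp this with ⟨_, h2⟩ | ⟨h1, _⟩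
    · exact hyz h2
    · exact hxz h1
  have hne₃₂ : e₃ ≠ e₂ := by
    intro hEq
    have : s(x, z) = s(y, z) := by rw [← hends₃, ← hends₂, hEq]
    rcases Sym2.eq_iff.mp this with ⟨h1, _⟩ | ⟨h1, h2⟩
    · exact hxy h1
    · exact hyz h2.symm
  have hxe₃ : x ∈ (Kn n).ends e₃ := by rw [hends₃]; exact Sym2.mem_mk_left x z
  have hze₃ : z ∈ (Kn n).ends e₃ := by rw [hends₃]; exact Sym2.mem_mk_right x z
  have hze₂ : z ∈ (Kn n).ends e₂ := by rw [hends₂]; exact Sym2.mem_mk_right y z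
  have hye₁ : y ∈ (Kn n).ends e₁ := by rw [hends₁]; exact Sym2.mem_mk_right x y
  -- colour of e₃ is strictly between 1 and n-1
  have hφ₃ne₁ : φ e₃ ≠ φ e₁ := hproper e₃ e₁ ⟨fun h => hne₁₃ h.symm, x, hxe₃, hxe₁⟩
  have hφ₃ne₂ : φ e₃ ≠ φ e₂ := hproper e₃ e₂ ⟨hne₃₂, z, hze₃, hze₂⟩
  have hr₃ := hrange e₃
  simp only [Finset.mem_Icc] at hr₃
  have hlt₁ : φ e₃ < φ e₁ := by rw [hφ₁]; rw [hφ₁] at hφ₃ne₁; omega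
  have hlt₂ : φ e₂ < φ e₃ := by rw [hφ₂]; rw [hφ₂] at hφ₃ne₂; omega
  refine ⟨x, y, z, e₁, e₂, e₃, hx, hy, hz, hxy, hyz, hxz, hends₁, hφ₁, hends₂, hφ₂, hends₃,
    ⟨x, hne₁₃, hxe₁, hxe₃, Or.inl ⟨hx, hlt₁⟩⟩,
    ⟨z, hne₃₂, hze₃, hze₂, Or.inl ⟨hz, hlt₂⟩⟩,
    ⟨y, fun h => hne₁₂ h.symm, hye₂, hye₁, Or.inr ⟨hy, by rw [hφ₂, hφ₁]; omega⟩⟩⟩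
end

section
/- Let G be a graph obtained from a bipartite multigraph H with bipartition (D₀, U₀) by adding one new edge e between two vertices of D₀, and suppose χ'(G) = k ≥ 1. Colour G properly with k colours so that e receives colour 1, and set D = D₀, U = U₀. Then the Galvin orientation of L(G) with respect to (D, U) and this colouring has all outdegrees at most k − 1 and contains no directed cycle through the vertex e of L(G). -/
/-- "Bipartite plus an edge": if every edge of `G` other than `e₀` has one end in `D`
and one in `U`, while `e₀` joins two `D`-vertices, and `G` is properly `k`-edge-coloured
with `φ e₀ = 1`, then the Galvin orientation of `L(G)` w.r.t. `(D, U)` and `φ` has all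
outdegrees at most `k − 1` and contains no directed cycle through `e₀`. -/
theorem bipartite_plus_edge_galvin {V E : Type*} (G : Multigraph V E)
    (D : V → Prop) (k : ℕ) (hk : 1 ≤ k)
    (e₀ : E) (a b : V) (he₀ : G.ends e₀ = s(a, b)) (ha : D a) (hb : D b)
    (hbip : ∀ f : E, f ≠ e₀ → ∃ x y, G.ends f = s(x, y) ∧ D x ∧ ¬ D y)
    (φ : E → ℕ) (hproper : G.Proper φ)
    (hrange : ∀ f, φ f ∈ Finset.Icc 1 k) (hφe₀ : φ e₀ = 1) :
    (∀ f, G.outdeg D φ f ≤ k - 1) ∧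
    (∀ (m : ℕ) (c : ZMod m → E), 1 ≤ m →
      (∀ i, G.Arc D φ (c i) (c (i + 1))) → ∀ i, c i ≠ e₀) := by

  -- No arc leaves e₀.
  have hnoarc : ∀ v f, ¬ G.ArcAt D φ e₀ v f := by
    rintro v f ⟨hne, hv, hvf, h⟩
    have hvD : D v := by
      rw [he₀] at hv
      rcases Sym2.mem_iff.mp hv with rfl | rfl
      · exact ha
      · exact hb
    rcases h with ⟨_, hlt⟩ | ⟨hnD, _⟩
    · have h1 := (Finset.mem_Icc.mp (hrange f)).1
      omega
    · exact hnD hvD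
  constructor
  · intro f
    by_cases hf : f = e₀
    · subst hf
      have : IsEmpty {p : V × E // G.ArcAt D φ f p.1 p.2} :=
        ⟨fun p => hnoarc p.1.1 p.1.2 p.2⟩
      simp [Multigraph.outdeg, Nat.card_of_isEmpty]
    · obtain ⟨x, y, hxy, hx, hy⟩ := hbip f hf
      classical
      set T := (Finset.Icc 1 k).erase (φ f) with hT
      have hmem : ∀ p : {p : V × E // G.ArcAt D φ f p.1 p.2}, φ p.1.2 ∈ T := by
        rintro ⟨⟨v, g⟩, hne, hv, hvg, h⟩
        refine Finset.mem_erase.mpr ⟨?_, hrange g⟩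
        show φ g ≠ φ f
        rcases h with ⟨_, hlt⟩ | ⟨_, hlt⟩ <;>
          [change φ g < φ f at hlt; change φ f < φ g at hlt] <;> omega
      have hvert : ∀ p : {p : V × E // G.ArcAt D φ f p.1 p.2},
          p.1.1 = x ∨ p.1.1 = y := by
        rintro ⟨⟨v, g⟩, hne, hv, hvg, h⟩
        rw [hxy] at hv
        exact Sym2.mem_iff.mp hv
      -- at x the colour is smaller, at y larger
      have hxlt : ∀ p : {p : V × E // G.ArcAt D φ f p.1 p.2},
          p.1.1 = x → φ p.1.2 < φ f := by
        rintro ⟨⟨v, g⟩, hne, hv, hvg, h⟩ rfl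
        rcases h with ⟨_, hlt⟩ | ⟨hnD, _⟩
        · exact hlt
        · exact absurd hx hnD
      have hylt : ∀ p : {p : V × E // G.ArcAt D φ f p.1 p.2},
          p.1.1 = y → φ f < φ p.1.2 := by
        rintro ⟨⟨v, g⟩, hne, hv, hvg, h⟩ rfl
        rcases h with ⟨hD, _⟩ | ⟨_, hlt⟩
        · exact absurd hD hy
        · exact hlt
      have hinj : Function.Injective
          (fun p : {p : V × E // G.ArcAt D φ f p.1 p.2} =>
            (⟨φ p.1.2, hmem p⟩ : T)) := by
        intro p q hpq
        have hcol : φ p.1.2 = φ q.1.2 := congrArg Subtype.val hpq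
        have hvv : p.1.1 = q.1.1 := by
          rcases hvert p with hp | hp <;> rcases hvert q with hq | hq <;>
            try (rw [hp, hq])
          · have h1 := hxlt p hp; have h2 := hylt q hq; omega
          · have h1 := hylt p hp; have h2 := hxlt q hq; omega
        have hee : p.1.2 = q.1.2 := by
          by_contra hne
          exact hproper _ _ ⟨hne, p.1.1, p.2.2.2.1,
            hvv ▸ q.2.2.2.1⟩ hcol
        obtain ⟨⟨v, g⟩, _⟩ := p
        obtain ⟨⟨w, h⟩, _⟩ := q
        simp_all
      have hcard := Nat.card_le_card_of_injective _ hinj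
      have hTcard : Nat.card T = k - 1 := by
        rw [Nat.card_eq_finsetCard, hT,
          Finset.card_erase_of_mem (hrange f), Nat.card_Icc]
        omega
      calc G.outdeg D φ f ≤ Nat.card T := hcard
        _ = k - 1 := hTcard
  · intro m c hm harc i
    intro hie
    obtain ⟨v, hv⟩ := harc i
    rw [hie] at hv
    exact hnoarc v _ hv
end

section
/- Let n ≥ 5 be odd, and consider a proper n-edge-colouring φ of K_n (so each colour class is a near-perfect matching missing exactly one vertex, and each colour is used on (n−1)/2 ≥ 2 edges). If (D, U) is any vertex partition such that the Galvin orientation of L(K_n) has all outdegrees at most n − 1, then no edge of colour 1 has both endpoints in U, and no edge of colour n has both endpoints in D; consequently |D| ≥ 2 and |U| ≥ 2. -/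
instance (n : ℕ) : Fintype (KnE n) := by unfold KnE; exact Subtype.fintype _
instance (n : ℕ) : DecidableEq (KnE n) := by unfold KnE; infer_instance

lemma card_two_compl {n : ℕ} (x y : Fin n) (hxy : x ≠ y) :
    Fintype.card {w : Fin n // w ≠ x ∧ w ≠ y} = n - 2 := by
  rw [Fintype.card_subtype]
  have h : Finset.filter (fun w : Fin n => w ≠ x ∧ w ≠ y) Finset.univ
      = Finset.univ \ {x, y} := by
    ext w; simp [Finset.mem_sdiff, not_or]
  rw [h, Finset.card_sdiff_of_subset (by simp), Finset.card_pair hxy]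
  simp

lemma outdeg_ge {n : ℕ} (φ : KnE n → ℕ) (D : Finset (Fin n)) (e : KnE n) (x y : Fin n)
    (hxy : (Kn n).ends e = s(x, y))
    (hcond : ∀ (f : KnE n) (v : Fin n), f ≠ e → v ∈ (Kn n).ends e → v ∈ (Kn n).ends f →
      ((v ∈ D ∧ φ f < φ e) ∨ (v ∉ D ∧ φ e < φ f))) :
    2 * (n - 2) ≤ (Kn n).outdeg (· ∈ D) φ e := by
  have hxney : x ≠ y := by
    have := (Kn n).not_loop e
    rw [hxy] at this
    simpa [Sym2.mk_isDiag_iff] using this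
  set vtx : Bool → Fin n := fun b => if b then x else y with hvtx
  have hvmem : ∀ b, vtx b ∈ (Kn n).ends e := by
    intro b; rw [hxy]; cases b <;> simp [hvtx]
  have hedge : ∀ (b : Bool) (w : {w : Fin n // w ≠ x ∧ w ≠ y}),
      ¬ (s(vtx b, w.1)).IsDiag := by
    rintro b ⟨w, hw1, hw2⟩
    cases b <;> simp [hvtx, Sym2.mk_isDiag_iff] <;>
      [exact fun h => hw2 h.symm; exact fun h => hw1 h.symm]
  set F : Bool × {w : Fin n // w ≠ x ∧ w ≠ y} →
      {p : Fin n × KnE n // (Kn n).ArcAt (· ∈ D) φ e p.1 p.2} := fun bw =>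
    ⟨(vtx bw.1, ⟨s(vtx bw.1, bw.2.1), hedge bw.1 bw.2⟩), by
      have hne : (⟨s(vtx bw.1, bw.2.1), hedge bw.1 bw.2⟩ : KnE n) ≠ e := by
        intro h
        have : s(vtx bw.1, bw.2.1) = s(x, y) := by
          have := congrArg Subtype.val h
          simpa [Kn] using this.trans hxy
        rw [Sym2.eq_iff] at this
        obtain ⟨hw1, hw2⟩ := bw.2.2
        rcases this with ⟨_, h2⟩ | ⟨_, h2⟩
        · exact hw2 h2
        · exact hw1 h2
      have hmemf : vtx bw.1 ∈ (Kn n).ends ⟨s(vtx bw.1, bw.2.1), hedge bw.1 bw.2⟩ := by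
        simp [Kn]
      exact ⟨Ne.symm hne, hvmem bw.1, hmemf,
        hcond _ _ hne (hvmem bw.1) hmemf⟩⟩ with hF
  have hinj : Function.Injective F := by
    rintro ⟨b1, w1, hw1a, hw1b⟩ ⟨b2, w2, hw2a, hw2b⟩ h
    have h' := congrArg (fun p => p.1) (congrArg Subtype.val h)
    have h'' := congrArg (fun p => (p.2 : KnE n).1) (congrArg Subtype.val h)
    simp only [hF] at h' h''
    have hb : b1 = b2 := by
      cases b1 <;> cases b2
      · rfl
      · exact absurd ((by simpa [hvtx] using h') : y = x) (Ne.symm hxney)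
      · exact absurd ((by simpa [hvtx] using h') : x = y) hxney
      · rfl
    subst hb
    have hw : w1 = w2 := by
      rw [Sym2.eq_iff] at h''
      rcases h'' with ⟨_, h2⟩ | ⟨h1, h2⟩
      · exact h2
      · cases b1 <;> simp_all [hvtx]
    simp [hw]
  have hcard := Nat.card_le_card_of_injective F hinj
  have : Nat.card (Bool × {w : Fin n // w ≠ x ∧ w ≠ y}) = 2 * (n - 2) := by
    rw [Nat.card_prod, Nat.card_eq_fintype_card, Nat.card_eq_fintype_card,
      card_two_compl x y hxney]
    simp
  rw [this] at hcard
  exact hcard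

lemma sym2_exists_mk {α : Type*} (z : Sym2 α) : ∃ x y, z = s(x, y) := by
  induction z using Sym2.ind with
  | _ x y => exact ⟨x, y, rfl⟩

lemma two_le_card_of_hits {n : ℕ} (φ : KnE n → ℕ) (hproper : (Kn n).Proper φ) (i : ℕ)
    (hcard : 2 ≤ Nat.card {e : KnE n // φ e = i}) (S : Finset (Fin n))
    (hhit : ∀ e : KnE n, φ e = i → ∃ v, v ∈ (Kn n).ends e ∧ v ∈ S) :
    2 ≤ S.card := by
  have : Nontrivial {e : KnE n // φ e = i} :=
    Finite.one_lt_card_iff_nontrivial.mp (by omega)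
  obtain ⟨⟨e1, he1⟩, ⟨e2, he2⟩, hne⟩ := this.exists_pair_ne
  have hne' : e1 ≠ e2 := fun h => hne (Subtype.ext h)
  obtain ⟨v1, hv1e, hv1S⟩ := hhit e1 he1
  obtain ⟨v2, hv2e, hv2S⟩ := hhit e2 he2
  have hvne : v1 ≠ v2 := by
    rintro rfl
    exact hproper e1 e2 ⟨hne', v1, hv1e, hv2e⟩ (he1.trans he2.symm)
  rw [show (2 : ℕ) = 1 + 1 from rfl, Nat.add_one_le_iff]
  exact Finset.one_lt_card.mpr ⟨v1, hv1S, v2, hv2S, hvne⟩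


/-- For odd `n ≥ 5` and a proper `n`-edge-colouring of `K_n` (each colour class a
near-perfect matching of `(n−1)/2` edges): if `(D, U)` is a vertex partition whose
Galvin orientation has all outdegrees at most `n − 1`, then no colour-1 edge has both
ends in `U`, no colour-`n` edge has both ends in `D`, and `|D| ≥ 2` and `|U| ≥ 2`. -/
theorem odd_clique_partition_constraints (n : ℕ) (hn : 5 ≤ n) (hodd : Odd n)
    (φ : KnE n → ℕ) (hproper : (Kn n).Proper φ)
    (hrange : ∀ e, φ e ∈ Finset.Icc 1 n)
    (hclass : ∀ i ∈ Finset.Icc 1 n, Nat.card {e : KnE n // φ e = i} = (n - 1) / 2)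
    (D : Finset (Fin n))
    (hout : ∀ e, (Kn n).outdeg (· ∈ D) φ e ≤ n - 1) :
    (∀ (e : KnE n) (x y : Fin n), (Kn n).ends e = s(x, y) → φ e = 1 →
      ¬ (x ∉ D ∧ y ∉ D)) ∧
    (∀ (e : KnE n) (x y : Fin n), (Kn n).ends e = s(x, y) → φ e = n →
      ¬ (x ∈ D ∧ y ∈ D)) ∧
    2 ≤ D.card ∧ 2 ≤ (Finset.univ \ D).card := by
  have h1 : ∀ (e : KnE n) (x y : Fin n), (Kn n).ends e = s(x, y) → φ e = 1 →
      ¬ (x ∉ D ∧ y ∉ D) := by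
    rintro e x y hxy he ⟨hx, hy⟩
    have hcond : ∀ (f : KnE n) (v : Fin n), f ≠ e → v ∈ (Kn n).ends e → v ∈ (Kn n).ends f →
        ((v ∈ D ∧ φ f < φ e) ∨ (v ∉ D ∧ φ e < φ f)) := by
      intro f v hfe hv hvf
      have hvD : v ∉ D := by
        rw [hxy] at hv; rcases Sym2.mem_iff.mp hv with rfl | rfl <;> assumption
      have hnec := hproper e f ⟨Ne.symm hfe, v, hv, hvf⟩
      have hf1 := (Finset.mem_Icc.mp (hrange f)).1
      exact Or.inr ⟨hvD, by omega⟩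
    have hge := outdeg_ge φ D e x y hxy hcond
    have hle := hout e
    omega
  have h2 : ∀ (e : KnE n) (x y : Fin n), (Kn n).ends e = s(x, y) → φ e = n →
      ¬ (x ∈ D ∧ y ∈ D) := by
    rintro e x y hxy he ⟨hx, hy⟩
    have hcond : ∀ (f : KnE n) (v : Fin n), f ≠ e → v ∈ (Kn n).ends e → v ∈ (Kn n).ends f →
        ((v ∈ D ∧ φ f < φ e) ∨ (v ∉ D ∧ φ e < φ f)) := by
      intro f v hfe hv hvf
      have hvD : v ∈ D := by
        rw [hxy] at hv; rcases Sym2.mem_iff.mp hv with rfl | rfl <;> assumption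
      have hnec := hproper e f ⟨Ne.symm hfe, v, hv, hvf⟩
      have hf1 := (Finset.mem_Icc.mp (hrange f)).2
      exact Or.inl ⟨hvD, by omega⟩
    have hge := outdeg_ge φ D e x y hxy hcond
    have hle := hout e
    omega
  refine ⟨h1, h2, ?_, ?_⟩
  · refine two_le_card_of_hits φ hproper 1 ?_ D ?_
    · rw [hclass 1 (Finset.mem_Icc.mpr ⟨le_refl 1, by omega⟩)]; omega
    · intro e he
      obtain ⟨x, y, hxy⟩ := sym2_exists_mk ((Kn n).ends e)
      have := h1 e x y hxy he
      by_cases hx : x ∈ D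
      · exact ⟨x, by rw [hxy]; simp, hx⟩
      · have hy : y ∈ D := by tauto
        exact ⟨y, by rw [hxy]; simp, hy⟩
  · refine two_le_card_of_hits φ hproper n ?_ _ ?_
    · rw [hclass n (Finset.mem_Icc.mpr ⟨by omega, le_refl n⟩)]; omega
    · intro e he
      obtain ⟨x, y, hxy⟩ := sym2_exists_mk ((Kn n).ends e)
      have := h2 e x y hxy he
      by_cases hx : x ∈ D
      · have hy : y ∉ D := by tauto
        exact ⟨y, by rw [hxy]; simp, by simp [hy]⟩
      · exact ⟨x, by rw [hxy]; simp, by simp [hx]⟩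
end

section
/- A simple connected graph G with no odd cycle of length 5 or more, other than K₃, satisfies χ'(G) = Δ(G). Specifically, if G is connected, simple, contains no induced or non-induced odd cycle of length ≥ 5, and G ≠ K₃, then the chromatic index of G equals its maximum degree. -/
/-!
Colour `G` with `k ≥ Δ(G)` colours by adding one edge `uv` at a time, with colours `a` missing
at `u` and `b` missing at `v`. If `v` is not in the `a`/`b` Kempe chain of `u`, swapping that
chain frees `b` at `u`. Otherwise the chain is an alternating `u`–`v` path of even length,
which closes up with `uv` to an odd cycle, hence a triangle `u x v` with `ux` coloured `b` and
`xv` coloured `a`. Then `k ≥ 3` (a connected graph of maximum degree two containing a triangle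
is `K₃`), so there is a third colour `c`. The `a`/`c` chain of `u` cannot reach `x` without
producing an odd cycle of length at least five; swapping it frees `c` at `u` and keeps the
triangle's colours, so the first argument now succeeds with `c` and `b`.
-/

namespace SimpleGraph

variable {V : Type*}

structure IsEdgeColoring (H : SimpleGraph V) (k : ℕ) (C : Sym2 V → ℕ) : Prop where
  lt : ∀ ⦃x y⦄, H.Adj x y → C s(x, y) < k
  ne : ∀ ⦃x y z⦄, H.Adj x y → H.Adj x z → y ≠ z → C s(x, y) ≠ C s(x, z)

def MissesColor (H : SimpleGraph V) (C : Sym2 V → ℕ) (u : V) (a : ℕ) : Prop :=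
  ∀ ⦃z⦄, H.Adj u z → C s(u, z) ≠ a

def kempeGraph (H : SimpleGraph V) (C : Sym2 V → ℕ) (a b : ℕ) : SimpleGraph V :=
  fromEdgeSet (H.edgeSet ∩ C ⁻¹' {a, b})

def OddCyclesAreTriangles (G : SimpleGraph V) : Prop :=
  ∀ (v : V) (w : G.Walk v v), w.IsCycle → Odd w.length → w.length = 3

variable {G H : SimpleGraph V} {k a b : ℕ} {C : Sym2 V → ℕ} {u v x y z : V}

lemma IsEdgeColoring.eq_of_color_eq (hC : H.IsEdgeColoring k C) (hy : H.Adj x y)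
    (hz : H.Adj x z) (h : C s(x, y) = C s(x, z)) : y = z :=
  not_not.mp fun hyz => hC.ne hy hz hyz h

lemma kempeGraph_adj :
    (H.kempeGraph C a b).Adj x y ↔ H.Adj x y ∧ (C s(x, y) = a ∨ C s(x, y) = b) := by
  simp only [kempeGraph, fromEdgeSet_adj, Set.mem_inter_iff, mem_edgeSet, Set.mem_preimage,
    Set.mem_insert_iff, Set.mem_singleton_iff]
  exact ⟨fun h => h.1, fun h => ⟨h, h.1.ne⟩⟩

lemma kempeGraph_le : H.kempeGraph C a b ≤ H := fun _ _ h => (kempeGraph_adj.mp h).1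

lemma IsEdgeColoring.color_getVert_of_isPath (hC : H.IsEdgeColoring k C)
    (hu : H.MissesColor C u a) {p : (H.kempeGraph C a b).Walk u v} (hp : p.IsPath) :
    ∀ {i : ℕ}, i < p.length →
      C s(p.getVert i, p.getVert (i + 1)) = if Even i then b else a
  | 0, h0 => by
    have h := kempeGraph_adj.mp (p.adj_getVert_succ h0)
    rw [p.getVert_zero] at h
    simpa using h.2.resolve_left (hu h.1)
  | i + 1, hi => by
    have ih := hC.color_getVert_of_isPath hu hp (i := i) (by omega)
    have h := kempeGraph_adj.mp (p.adj_getVert_succ hi)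
    have hprev := (kempeGraph_adj.mp (p.adj_getVert_succ (i := i) (by omega))).1.symm
    have hne : p.getVert i ≠ p.getVert (i + 1 + 1) := fun heq => by
      have := hp.getVert_injOn (show i ≤ p.length by omega) (show i + 2 ≤ p.length by omega) heq
      omega
    have hdiff := hC.ne hprev h.1 hne
    rw [Sym2.eq_swap, ih] at hdiff
    simp only [Nat.even_add_one]
    split_ifs at hdiff ⊢ <;> grind

lemma OddCyclesAreTriangles.mono (hG : G.OddCyclesAreTriangles) (hHG : H ≤ G) :
    H.OddCyclesAreTriangles := fun v w hw hodd => by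
  simpa using hG v (w.mapLe hHG) (hw.mapLe hHG) (by simpa using hodd)

lemma OddCyclesAreTriangles.length_eq_two (hG : G.OddCyclesAreTriangles) (hHG : H ≤ G)
    {p : H.Walk u v} (hp : p.IsPath) (hvu : G.Adj v u) (hvu' : ¬ H.Adj v u)
    (heven : Even p.length) : p.length = 2 := by
  have hcycle : (Walk.cons hvu (p.mapLe hHG)).IsCycle := by
    refine (Walk.cons_isCycle_iff _ hvu).mpr ⟨hp.mapLe hHG, fun hmem => hvu' ?_⟩
    exact p.adj_of_mem_edges (by simpa [Walk.mapLe, Walk.edges_map] using hmem)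
  have := hG v _ hcycle (by simpa using heven.add_one)
  rw [Walk.length_cons, Walk.length_mapLe] at this
  omega

section Kempe

open scoped Classical

/-- The swap is applied to every edge meeting the Kempe component of `u`: edges of colours
other than `a`, `b` are fixed by `Equiv.swap a b` anyway. -/
noncomputable def kempeSwap (H : SimpleGraph V) (C : Sym2 V → ℕ) (a b : ℕ) (u : V)
    (e : Sym2 V) : ℕ :=
  if ∃ x ∈ e, (H.kempeGraph C a b).Reachable u x then Equiv.swap a b (C e) else C e

lemma kempeSwap_mk (hxy : H.Adj x y) :
    H.kempeSwap C a b u s(x, y) =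
      if (H.kempeGraph C a b).Reachable u x then Equiv.swap a b (C s(x, y)) else C s(x, y) := by
  by_cases hx : (H.kempeGraph C a b).Reachable u x
  · rw [kempeSwap, if_pos ⟨x, Sym2.mem_mk_left x y, hx⟩, if_pos hx]
  · rw [kempeSwap, if_neg hx]
    split_ifs with h
    · obtain ⟨w, hw, hr⟩ := h
      rcases Sym2.mem_iff.mp hw with rfl | rfl
      · exact absurd hr hx
      refine Equiv.swap_apply_of_ne_of_ne (fun ha => hx ?_) (fun hb => hx ?_)
      · exact hr.trans (kempeGraph_adj.mpr ⟨hxy, .inl ha⟩).symm.reachable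
      · exact hr.trans (kempeGraph_adj.mpr ⟨hxy, .inr hb⟩).symm.reachable
    · rfl

lemma kempeSwap_of_not_reachable (hx : ¬ (H.kempeGraph C a b).Reachable u x)
    (hxy : H.Adj x y) : H.kempeSwap C a b u s(x, y) = C s(x, y) := by
  rw [kempeSwap_mk hxy, if_neg hx]

lemma kempeSwap_of_ne {e : Sym2 V} (ha : C e ≠ a) (hb : C e ≠ b) :
    H.kempeSwap C a b u e = C e := by
  unfold kempeSwap
  split_ifs
  exacts [Equiv.swap_apply_of_ne_of_ne ha hb, rfl]

lemma IsEdgeColoring.kempeSwap (hC : H.IsEdgeColoring k C) (ha : a < k) (hb : b < k) :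
    H.IsEdgeColoring k (H.kempeSwap C a b u) := by
  constructor
  · intro x y hxy
    rw [kempeSwap_mk hxy, Equiv.swap_apply_def]
    split_ifs <;> first | assumption | exact hC.lt hxy
  · intro x y z hy hz hyz
    rw [kempeSwap_mk hy, kempeSwap_mk hz]
    split_ifs
    · exact (Equiv.swap a b).injective.ne (hC.ne hy hz hyz)
    · exact hC.ne hy hz hyz

lemma MissesColor.kempeSwap (hu : H.MissesColor C u a) :
    H.MissesColor (H.kempeSwap C a b u) u b := by
  intro z hz hb
  rw [kempeSwap_mk hz, if_pos (Reachable.refl u), Equiv.swap_apply_eq_iff,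
    Equiv.swap_apply_right] at hb
  exact hu hz hb

lemma IsEdgeColoring.update (huv : G.Adj u v)
    (hC : (G.deleteEdges {s(u, v)}).IsEdgeColoring k C) (hb : b < k)
    (hu : (G.deleteEdges {s(u, v)}).MissesColor C u b)
    (hv : (G.deleteEdges {s(u, v)}).MissesColor C v b) :
    G.IsEdgeColoring k (Function.update C s(u, v) b) := by
  have hdel : ∀ {x y}, G.Adj x y → s(x, y) ≠ s(u, v) → (G.deleteEdges {s(u, v)}).Adj x y :=
    fun h hne => deleteEdges_adj.mpr ⟨h, hne⟩
  constructor
  · intro x y hxy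
    rw [Function.update_apply]
    split_ifs with h
    exacts [hb, hC.lt (hdel hxy h)]
  · intro x y z hy hz hyz
    simp only [Function.update_apply]
    split_ifs with h1 h2 h2
    · exact absurd (Sym2.congr_right.mp (h1.trans h2.symm)) hyz
    · rcases Sym2.eq_iff.mp h1 with ⟨rfl, rfl⟩ | ⟨rfl, rfl⟩
      exacts [(hu (hdel hz h2)).symm, (hv (hdel hz h2)).symm]
    · rcases Sym2.eq_iff.mp h2 with ⟨rfl, rfl⟩ | ⟨rfl, rfl⟩
      exacts [hu (hdel hy h1), hv (hdel hy h1)]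
    · exact hC.ne (hdel hy h1) (hdel hz h2) hyz

end Kempe

/-- Otherwise `p` ends with a `b`-edge (the `a`-edge at `t` leads to `s`), and `p`, `ts`, `su`
form an odd cycle of length at least five. -/
lemma OddCyclesAreTriangles.mem_support_of_isPath (hG : G.OddCyclesAreTriangles) (hHG : H ≤ G)
    (hC : H.IsEdgeColoring k C) (hu : H.MissesColor C u a) {s t : V} (hts : H.Adj t s)
    (hcol : C s(t, s) = a) (hus : G.Adj u s) (hut' : ¬ (H.kempeGraph C a b).Adj u t)
    (hus' : ¬ (H.kempeGraph C a b).Adj u s) {p : (H.kempeGraph C a b).Walk u t}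
    (hp : p.IsPath) : s ∈ p.support := by
  by_contra hs
  obtain ⟨n, hn⟩ : ∃ n, p.length = n + 1 := Nat.exists_eq_succ_of_ne_zero fun h0 => by
    cases Walk.eq_of_length_eq_zero h0
    exact hu hts hcol
  by_cases heven : Even n
  · have hts' : (H.kempeGraph C a b).Adj t s := kempeGraph_adj.mpr ⟨hts, .inl hcol⟩
    have h2 := hG.length_eq_two (kempeGraph_le.trans hHG) (hp.concat hs hts') hus.symm
      (fun h => hus' h.symm)
      (by rwa [Walk.length_concat, hn, Nat.even_add_one, Nat.even_add_one, not_not])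
    rw [Walk.length_concat] at h2
    exact hut' (p.adj_of_length_eq_one (by omega))
  · have hlast := hC.color_getVert_of_isPath hu hp (i := n) (by omega)
    rw [if_neg heven, ← hn, p.getVert_length] at hlast
    have hadj := (kempeGraph_adj.mp (p.adj_getVert_succ (i := n) (by omega))).1
    rw [← hn, p.getVert_length] at hadj
    obtain rfl : p.getVert n = s :=
      hC.eq_of_color_eq hadj.symm hts (by rw [Sym2.eq_swap, hlast, hcol])
    exact hs (p.getVert_mem_support n)

lemma OddCyclesAreTriangles.not_reachable_kempeGraph (hG : G.OddCyclesAreTriangles)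
    (huv : G.Adj u v) (hC : (G.deleteEdges {s(u, v)}).IsEdgeColoring k C)
    (hu : (G.deleteEdges {s(u, v)}).MissesColor C u a) {c : ℕ}
    (hux : (G.deleteEdges {s(u, v)}).Adj u x) (hxv : (G.deleteEdges {s(u, v)}).Adj x v)
    (hca : C s(x, v) = a) (hcc : C s(u, x) ≠ c) :
    ¬ ((G.deleteEdges {s(u, v)}).kempeGraph C a c).Reachable u x := by
  classical
  intro hr
  obtain ⟨p, hp⟩ := hr.exists_isPath
  have hux' : ¬ ((G.deleteEdges {s(u, v)}).kempeGraph C a c).Adj u x :=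
    fun h => (kempeGraph_adj.mp h).2.elim (hu hux) hcc
  have huv' : ¬ ((G.deleteEdges {s(u, v)}).kempeGraph C a c).Adj u v :=
    fun h => (deleteEdges_adj.mp (kempeGraph_adj.mp h).1).2 rfl
  by_cases hv : v ∈ p.support
  · refine Walk.endpoint_notMem_support_takeUntil hp hv hxv.ne
      (hG.mem_support_of_isPath (deleteEdges_le _) hC hu hxv.symm ?_ hux.1 huv' hux'
        (hp.takeUntil hv))
    rwa [Sym2.eq_swap]
  · exact hv (hG.mem_support_of_isPath (deleteEdges_le _) hC hu hxv hca huv hux' huv' hp)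

lemma OddCyclesAreTriangles.exists_isEdgeColoring_or_triangle (hG : G.OddCyclesAreTriangles)
    (huv : G.Adj u v) (hC : (G.deleteEdges {s(u, v)}).IsEdgeColoring k C) (ha : a < k)
    (hb : b < k) (hu : (G.deleteEdges {s(u, v)}).MissesColor C u a)
    (hv : (G.deleteEdges {s(u, v)}).MissesColor C v b) :
    (∃ C', G.IsEdgeColoring k C') ∨
      ∃ x, (G.deleteEdges {s(u, v)}).Adj u x ∧ (G.deleteEdges {s(u, v)}).Adj x v ∧
        C s(u, x) = b ∧ C s(x, v) = a := by
  by_cases hreach : ((G.deleteEdges {s(u, v)}).kempeGraph C a b).Reachable u v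
  · right
    obtain ⟨p, hp⟩ := hreach.exists_isPath
    obtain ⟨n, hn⟩ : ∃ n, p.length = n + 1 :=
      Nat.exists_eq_succ_of_ne_zero fun h0 => huv.ne (Walk.eq_of_length_eq_zero h0)
    have hlast := hC.color_getVert_of_isPath hu hp (i := n) (by omega)
    have hadj := (kempeGraph_adj.mp (p.adj_getVert_succ (i := n) (by omega))).1
    rw [← hn, p.getVert_length] at hlast hadj
    have hn_odd : ¬ Even n := fun heven => by
      rw [if_pos heven, Sym2.eq_swap] at hlast
      exact hv hadj.symm hlast
    have h2 := hG.length_eq_two (kempeGraph_le.trans (deleteEdges_le _)) hp huv.symm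
      (fun h => (deleteEdges_adj.mp (kempeGraph_adj.mp h).1).2 (Sym2.eq_swap))
      (by rwa [hn, Nat.even_add_one])
    obtain rfl : n = 1 := by omega
    have hfirst := hC.color_getVert_of_isPath hu hp (i := 0) (by omega)
    have hux := (kempeGraph_adj.mp (p.adj_getVert_succ (i := 0) (by omega))).1
    rw [p.getVert_zero] at hfirst hux
    exact ⟨p.getVert 1, hux, hadj, by simpa using hfirst, by simpa using hlast⟩
  · left
    refine ⟨_, (hC.kempeSwap ha hb).update huv hb hu.kempeSwap fun z hz => ?_⟩
    exact (kempeSwap_of_not_reachable hreach hz).trans_ne (hv hz)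

lemma OddCyclesAreTriangles.exists_isEdgeColoring_of_deleteEdges
    (hG : G.OddCyclesAreTriangles) (huv : G.Adj u v)
    (hC : (G.deleteEdges {s(u, v)}).IsEdgeColoring k C) (ha : a < k)
    (hb : b < k) (hu : (G.deleteEdges {s(u, v)}).MissesColor C u a)
    (hv : (G.deleteEdges {s(u, v)}).MissesColor C v b)
    (hk : ∀ x, G.Adj u x → G.Adj x v → 3 ≤ k) :
    ∃ C', G.IsEdgeColoring k C' := by
  rcases hG.exists_isEdgeColoring_or_triangle huv hC ha hb hu hv with
    h | ⟨x, hux, hxv, hcb, hca⟩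
  · exact h
  obtain ⟨c, hc, hc'⟩ : ∃ c ∈ Finset.range k, c ∉ ({a, b} : Finset ℕ) :=
    Finset.exists_mem_notMem_of_card_lt_card <| by
      grw [Finset.card_range, Finset.card_le_two, ← hk x hux.1 hxv.1]; omega
  rw [Finset.mem_range] at hc
  simp only [Finset.mem_insert, Finset.mem_singleton, not_or] at hc'
  have hcx : C s(u, x) ≠ c := hcb ▸ Ne.symm hc'.2
  have hx := hG.not_reachable_kempeGraph huv hC hu hux hxv hca hcx
  have hv' : ¬ ((G.deleteEdges {s(u, v)}).kempeGraph C a c).Reachable u v := fun h =>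
    hx (h.trans (kempeGraph_adj.mpr ⟨hxv.symm, .inl (by rwa [Sym2.eq_swap])⟩).reachable)
  rcases hG.exists_isEdgeColoring_or_triangle huv (hC.kempeSwap ha hc) hc hb hu.kempeSwap
      (fun z hz => (kempeSwap_of_not_reachable hv' hz).trans_ne (hv hz)) with
    h | ⟨y, huy, hyv, hcb', hcc'⟩
  · exact h
  have hux' : (G.deleteEdges {s(u, v)}).kempeSwap C a c u s(u, x) = b :=
    (kempeSwap_of_ne (hu hux) hcx).trans hcb
  obtain rfl := (hC.kempeSwap ha hc).eq_of_color_eq huy hux (hcb'.trans hux'.symm)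
  rw [kempeSwap_of_not_reachable hx hyv, hca] at hcc'
  exact absurd hcc'.symm hc'.1

lemma exists_missesColor (C : Sym2 V → ℕ) {s : Finset V} (hs : ∀ z, H.Adj x z → z ∈ s)
    (hk : s.card < k) : ∃ a < k, H.MissesColor C x a := by
  obtain ⟨a, ha, hna⟩ := Finset.exists_mem_notMem_of_card_lt_card
    (s := s.image fun z => C s(x, z)) (t := Finset.range k)
    (Finset.card_image_le.trans_lt (by rwa [Finset.card_range]))
  exact ⟨a, Finset.mem_range.mp ha, fun z hz hcz =>
    hna (Finset.mem_image.mpr ⟨z, hs z hz, hcz⟩)⟩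

theorem OddCyclesAreTriangles.exists_isEdgeColoring [Fintype V] [DecidableRel G.Adj]
    (hG : G.OddCyclesAreTriangles) (hdeg : ∀ x, G.degree x ≤ k)
    (hk : ∀ x y z, G.Adj x y → G.Adj y z → G.Adj x z → 3 ≤ k) :
    ∃ C, G.IsEdgeColoring k C := by
  classical
  suffices ∀ H ≤ G, ∃ C, H.IsEdgeColoring k C from this G le_rfl
  intro H
  induction H using WellFoundedLT.induction with | _ H ih => ?_
  intro hHG
  rcases eq_or_ne H ⊥ with rfl | hH
  · exact ⟨0, ⟨fun _ _ h => h.elim, fun _ _ _ h => h.elim⟩⟩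
  obtain ⟨u, v, huv⟩ := ne_bot_iff_exists_adj.mp hH
  have hlt : H.deleteEdges {s(u, v)} < H :=
    (deleteEdges_le _).lt_of_ne fun h => (deleteEdges_adj.mp (h ▸ huv)).2 rfl
  obtain ⟨C, hC⟩ := ih _ hlt (hlt.le.trans hHG)
  have hmiss : ∀ {x y}, H.Adj x y → s(x, y) = s(u, v) →
      ∃ a < k, (H.deleteEdges {s(u, v)}).MissesColor C x a := fun {x y} hxy he => by
    refine exists_missesColor C (s := (G.neighborFinset x).erase y) (fun z hz => ?_) ?_
    · obtain ⟨hxz, hne⟩ := deleteEdges_adj.mp hz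
      refine Finset.mem_erase.mpr ⟨?_, (mem_neighborFinset _ _ _).mpr (hHG hxz)⟩
      rintro rfl
      exact hne he
    · rw [Finset.card_erase_of_mem ((mem_neighborFinset _ _ _).mpr (hHG hxy)),
        card_neighborFinset_eq_degree]
      have := (G.degree_pos_iff_exists_adj x).mpr ⟨y, hHG hxy⟩
      have := hdeg x
      omega
  obtain ⟨a, ha, hu⟩ := hmiss huv rfl
  obtain ⟨b, hb, hv⟩ := hmiss huv.symm Sym2.eq_swap
  exact (hG.mono hHG).exists_isEdgeColoring_of_deleteEdges huv hC ha hb hu hv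
    fun x hux hxv => hk u x v (hHG hux) (hHG hxv) (hHG huv)

lemma IsEdgeColoring.exists_fin (hC : G.IsEdgeColoring k C) :
    ∃ C' : G.edgeSet → Fin k, ∀ e f : G.edgeSet, e ≠ f →
      (∃ v : V, v ∈ (e : Sym2 V) ∧ v ∈ (f : Sym2 V)) → C' e ≠ C' f := by
  refine ⟨fun e => ⟨C e, Sym2.ind (fun _ _ h => hC.lt h) e.1 e.2⟩, ?_⟩
  rintro ⟨e, he⟩ ⟨f, hf⟩ hef ⟨w, hwe, hwf⟩ hCef
  obtain ⟨y, rfl⟩ := Sym2.mem_iff_exists.mp hwe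
  obtain ⟨z, rfl⟩ := Sym2.mem_iff_exists.mp hwf
  exact hC.ne he hf (by rintro rfl; exact hef rfl) (Fin.mk.inj_iff.mp hCef)

lemma degree_le_of_edgeColoring [Fintype V] [DecidableRel G.Adj] (C : G.edgeSet → Fin k)
    (hC : ∀ e f : G.edgeSet, e ≠ f →
      (∃ v : V, v ∈ (e : Sym2 V) ∧ v ∈ (f : Sym2 V)) → C e ≠ C f) (w : V) :
    G.degree w ≤ k := by
  rw [← card_neighborSet_eq_degree, ← Fintype.card_fin k]
  refine Fintype.card_le_of_injective (fun z => C ⟨s(w, z), z.2⟩) fun y z hyz => ?_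
  by_contra hne
  refine hC _ _ (fun h => hne (Subtype.ext ?_))
    ⟨w, Sym2.mem_mk_left _ _, Sym2.mem_mk_left _ _⟩ hyz
  exact Sym2.congr_right.mp (congrArg Subtype.val h)

lemma three_le_degree_of_adj [Fintype V] [DecidableRel G.Adj] (hx : G.Adj w x) (hy : G.Adj w y)
    (hz : G.Adj w z) (hxy : x ≠ y) (hxz : x ≠ z) (hyz : y ≠ z) : 3 ≤ G.degree w := by
  classical
  rw [← card_neighborFinset_eq_degree,
    ← Finset.card_eq_three.mpr ⟨x, y, z, hxy, hxz, hyz, rfl⟩]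
  exact Finset.card_le_card (by simp [Finset.insert_subset_iff, hx, hy, hz])

lemma Connected.nonempty_iso_top_of_degree_le_two [Fintype V] [DecidableRel G.Adj]
    (hconn : G.Connected) (hdeg : ∀ w, G.degree w ≤ 2) (hxy : G.Adj x y) (hyz : G.Adj y z)
    (hxz : G.Adj x z) : Nonempty (G ≃g (⊤ : SimpleGraph (Fin 3))) := by
  classical
  have hS : ∀ w, w = x ∨ w = y ∨ w = z := by
    by_contra! ⟨w, hw⟩
    obtain ⟨d, -, hd, hd'⟩ := (hconn.preconnected x w).some.exists_boundary_dart {x, y, z}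
      (by simp) (by simpa using hw)
    simp only [Set.mem_insert_iff, Set.mem_singleton_iff, not_or] at hd hd'
    obtain ⟨hx', hy', hz'⟩ := hd'
    have hadj := d.adj
    rcases hd with h | h | h <;> rw [h] at hadj
    · have := three_le_degree_of_adj hxy hxz hadj hyz.ne (Ne.symm hy') (Ne.symm hz')
      linarith [hdeg x]
    · have := three_le_degree_of_adj hxy.symm hyz hadj hxz.ne (Ne.symm hx') (Ne.symm hz')
      linarith [hdeg y]
    · have := three_le_degree_of_adj hxz.symm hyz.symm hadj hxy.ne (Ne.symm hx') (Ne.symm hy')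
      linarith [hdeg z]
  have htop : G = ⊤ := by
    ext p q
    refine ⟨Adj.ne, fun hpq => ?_⟩
    rcases hS p with rfl | rfl | rfl <;> rcases hS q with rfl | rfl | rfl <;>
      first
        | exact absurd rfl hpq | assumption | exact hxy.symm | exact hyz.symm | exact hxz.symm
  have hcard : Fintype.card V = 3 := Finset.card_eq_three.mpr
    ⟨x, y, z, hxy.ne, hxz.ne, hyz.ne, (Finset.eq_univ_of_forall (by simpa using hS)).symm⟩
  subst htop
  exact ⟨Iso.completeGraph (Fintype.equivFinOfCardEq hcard)⟩

end SimpleGraph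

theorem no_long_odd_cycle_chromatic_index_general {V : Type*} [Fintype V]
    (G : SimpleGraph V) [DecidableRel G.Adj]
    (hconn : G.Connected)
    (hodd : ∀ (v : V) (w : G.Walk v v), w.IsCycle → Odd w.length → w.length = 3)
    (hK3 : ¬ Nonempty (G ≃g (⊤ : SimpleGraph (Fin 3)))) :
    sInf {k : ℕ | ∃ C : G.edgeSet → Fin k,
        ∀ e f : G.edgeSet, e ≠ f →
          (∃ v : V, v ∈ (e : Sym2 V) ∧ v ∈ (f : Sym2 V)) → C e ≠ C f}
      = G.maxDegree := by
  have hk : ∀ x y z, G.Adj x y → G.Adj y z → G.Adj x z → 3 ≤ G.maxDegree := by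
    intro x y z hxy hyz hxz
    by_contra! h
    exact hK3 (hconn.nonempty_iso_top_of_degree_le_two
      (fun w => by have := G.degree_le_maxDegree w; omega) hxy hyz hxz)
  obtain ⟨C, hC⟩ :=
    SimpleGraph.OddCyclesAreTriangles.exists_isEdgeColoring hodd G.degree_le_maxDegree hk
  have hmem := hC.exists_fin
  exact le_antisymm (Nat.sInf_le hmem) (le_csInf ⟨_, hmem⟩ fun j ⟨C', hC'⟩ =>
    G.maxDegree_le_of_forall_degree_le j (SimpleGraph.degree_le_of_edgeColoring C' hC'))

/-- A connected simple graph with no odd cycle of length 5 or more, other than `K₃`,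
has chromatic index equal to its maximum degree. -/
theorem no_long_odd_cycle_chromatic_index {V : Type*} [Fintype V] [DecidableEq V]
    (G : SimpleGraph V) [DecidableRel G.Adj]
    (hconn : G.Connected)
    (hodd : ∀ (v : V) (w : G.Walk v v), w.IsCycle → Odd w.length → w.length = 3)
    (hK3 : ¬ Nonempty (G ≃g (⊤ : SimpleGraph (Fin 3)))) :
    sInf {k : ℕ | ∃ C : G.edgeSet → Fin k,
        ∀ e f : G.edgeSet, e ≠ f →
          (∃ v : V, v ∈ (e : Sym2 V) ∧ v ∈ (f : Sym2 V)) → C e ≠ C f}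
      = G.maxDegree :=
  no_long_odd_cycle_chromatic_index_general G hconn hodd hK3
end
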